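/- arXiv:1906.05053 — 3 statements merged into one kernel-verified Lean document; each statement's English description precedes it below -/
import Mathlib

section
/- Let k ∈ ℂ belong to the closure of D₁ or to the closure of D₃; explicitly, writing k = x + iy, assume either (y ≥ 0 and 12x² − 4y² ≥ 1) or (y ≤ 0 and 12x² − 4y² ≤ 1). Then the cubic polynomial 4ν³ − ν − (4k³ − k) in ν has exactly one root in the closure of D₁', exactly one root in the closure of D₁'', and exactly one root in the closure of D₃; that is, each of the three sets {x+iy : y ≥ 0, x > 0, 12x² − 4y² ≥ 1}, {x+iy : y ≥ 0, x < 0, 12x² − 4y² ≥ 1}, and {x+iy : y ≤ 0, 12x² − 4y² ≤ 1} contains exactly one complex number ν with 4ν³ − ν = 4k³ − k. -/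
open Set

private lemma im_cubic (ν : ℂ) :
    (4 * ν ^ 3 - ν).im = ν.im * (12 * ν.re ^ 2 - 4 * ν.im ^ 2 - 1) := by
  simp [pow_succ, Complex.mul_im, Complex.mul_re]
  ring

private lemma injA (p q : ℂ) (hp1 : 0 ≤ p.im) (hp2 : 0 < p.re) (hp3 : 1 ≤ 12*p.re^2 - 4*p.im^2)
    (hq1 : 0 ≤ q.im) (hq2 : 0 < q.re) (hq3 : 1 ≤ 12*q.re^2 - 4*q.im^2)
    (h : 4*p^3 - p = 4*q^3 - q) : p = q := by
  have hfac : (p - q) * (4*(p^2 + p*q + q^2) - 1) = 0 := by linear_combination h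
  rcases mul_eq_zero.mp hfac with h0 | h1
  · exact sub_eq_zero.mp h0
  · have hre := congrArg Complex.re h1
    have him := congrArg Complex.im h1
    simp [pow_succ, Complex.mul_re, Complex.mul_im] at hre him
    have e1 : p.im = 0 := le_antisymm
      (by nlinarith [mul_nonneg hq2.le hq1, mul_nonneg hp2.le hq1, mul_nonneg hq2.le hp1]) hp1
    have e2 : q.im = 0 := le_antisymm
      (by nlinarith [mul_nonneg hp2.le hp1, mul_nonneg hp2.le hq1, mul_nonneg hq2.le hp1]) hq1
    simp only [e1, e2] at hre hp3 hq3
    have ht : 1/12 ≤ p.re * q.re := by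
      nlinarith [mul_pos hp2 hq2, mul_nonneg (by nlinarith : (0:ℝ) ≤ 12*p.re^2 - 1)
        (by nlinarith : (0:ℝ) ≤ 12*q.re^2 - 1)]
    have h5 : p.re = q.re := by nlinarith [sq_nonneg (p.re - q.re)]
    exact Complex.ext h5 (e1.trans e2.symm)

private lemma injB (p q : ℂ) (hp1 : 0 ≤ p.im) (hp2 : p.re < 0) (hp3 : 1 ≤ 12*p.re^2 - 4*p.im^2)
    (hq1 : 0 ≤ q.im) (hq2 : q.re < 0) (hq3 : 1 ≤ 12*q.re^2 - 4*q.im^2)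
    (h : 4*p^3 - p = 4*q^3 - q) : p = q := by
  have hfac : (p - q) * (4*(p^2 + p*q + q^2) - 1) = 0 := by linear_combination h
  rcases mul_eq_zero.mp hfac with h0 | h1
  · exact sub_eq_zero.mp h0
  · have hre := congrArg Complex.re h1
    have him := congrArg Complex.im h1
    simp [pow_succ, Complex.mul_re, Complex.mul_im] at hre him
    have e1 : p.im = 0 := le_antisymm
      (by nlinarith [mul_nonpos_of_nonpos_of_nonneg hq2.le hq1,
        mul_nonpos_of_nonpos_of_nonneg hp2.le hq1,
        mul_nonpos_of_nonpos_of_nonneg hq2.le hp1]) hp1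
    have e2 : q.im = 0 := le_antisymm
      (by nlinarith [mul_nonpos_of_nonpos_of_nonneg hp2.le hp1,
        mul_nonpos_of_nonpos_of_nonneg hp2.le hq1,
        mul_nonpos_of_nonpos_of_nonneg hq2.le hp1]) hq1
    simp only [e1, e2] at hre hp3 hq3
    have ht : 1/12 ≤ p.re * q.re := by
      nlinarith [mul_pos_of_neg_of_neg hp2 hq2, mul_nonneg (by nlinarith : (0:ℝ) ≤ 12*p.re^2 - 1)
        (by nlinarith : (0:ℝ) ≤ 12*q.re^2 - 1)]
    have h5 : p.re = q.re := by nlinarith [sq_nonneg (p.re - q.re)]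
    exact Complex.ext h5 (e1.trans e2.symm)

private lemma injC (p q : ℂ) (hp1 : p.im ≤ 0) (hp3 : 12*p.re^2 - 4*p.im^2 ≤ 1)
    (hq1 : q.im ≤ 0) (hq3 : 12*q.re^2 - 4*q.im^2 ≤ 1)
    (h : 4*p^3 - p = 4*q^3 - q) : p = q := by
  have hfac : (p - q) * (4*(p^2 + p*q + q^2) - 1) = 0 := by linear_combination h
  rcases mul_eq_zero.mp hfac with h0 | h1
  · exact sub_eq_zero.mp h0
  · have hre := congrArg Complex.re h1
    simp [pow_succ, Complex.mul_re, Complex.mul_im] at hre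
    have hy0 : p.im + q.im = 0 := by nlinarith [sq_nonneg (p.im + q.im), sq_nonneg (p.re - q.re)]
    have e1 : p.im = 0 := by linarith
    have e2 : q.im = 0 := by linarith
    simp only [e1, e2] at hre hp3 hq3
    have h5 : p.re = q.re := by nlinarith [sq_nonneg (p.re - q.re)]
    exact Complex.ext h5 (e1.trans e2.symm)

private lemma pigeon {P Q : ℂ → Prop} {a b c : ℂ} (hab : a ≠ b) (hac : a ≠ c) (hbc : b ≠ c)
    (ha : P a ∨ Q a) (hb : P b ∨ Q b) (hc : P c ∨ Q c)
    (hP : ∀ x y, P x → P y → x = y) (hQ : ∀ x y, Q x → Q y → x = y) : False := by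
  rcases ha with h | h <;> rcases hb with h' | h' <;> rcases hc with h'' | h''
  · exact hab (hP _ _ h h')
  · exact hab (hP _ _ h h')
  · exact hac (hP _ _ h h'')
  · exact hbc (hQ _ _ h' h'')
  · exact hbc (hP _ _ h' h'')
  · exact hac (hQ _ _ h h'')
  · exact hab (hQ _ _ h h')
  · exact hab (hQ _ _ h h')

private lemma real_of_sq_real {k : ℂ} {r : ℝ} (hr : 0 < r) (h : (r:ℂ) * k^2 = 1) :
    k.im = 0 ∧ r * k.re^2 = 1 := by
  have hre := congrArg Complex.re h
  have him := congrArg Complex.im h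
  simp [pow_succ, Complex.mul_re, Complex.mul_im] at hre him
  have hkim : k.im = 0 := by
    rcases him with h0 | h0
    · exact absurd h0 hr.ne'
    · have h2 : k.re * k.im = 0 := by linarith
      rcases mul_eq_zero.mp h2 with h1 | h1
      · exfalso; rw [h1] at hre; nlinarith [sq_nonneg k.im]
      · exact h1
  refine ⟨hkim, ?_⟩
  rw [hkim] at hre
  nlinarith [hre]

/-- for `k` in the closure of `D₁` or of `D₃`, the cubic `4ν³ − ν − (4k³ − k)`
has exactly one root in the closure of `D₁' = {Im ν ≥ 0, Re ν > 0, 12(Re ν)² − 4(Im ν)² ≥ 1}`,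
exactly one root in the closure of `D₁'' = {Im ν ≥ 0, Re ν < 0, 12(Re ν)² − 4(Im ν)² ≥ 1}`,
and exactly one root in the closure of `D₃ = {Im ν ≤ 0, 12(Re ν)² − 4(Im ν)² ≤ 1}`. -/
theorem cubic_roots_in_closures
    (k : ℂ)
    (hk : (0 ≤ k.im ∧ 1 ≤ 12 * k.re ^ 2 - 4 * k.im ^ 2) ∨
          (k.im ≤ 0 ∧ 12 * k.re ^ 2 - 4 * k.im ^ 2 ≤ 1)) :
    (∃! ν : ℂ, (0 ≤ ν.im ∧ 0 < ν.re ∧ 1 ≤ 12 * ν.re ^ 2 - 4 * ν.im ^ 2) ∧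
        4 * ν ^ 3 - ν = 4 * k ^ 3 - k) ∧
    (∃! ν : ℂ, (0 ≤ ν.im ∧ ν.re < 0 ∧ 1 ≤ 12 * ν.re ^ 2 - 4 * ν.im ^ 2) ∧
        4 * ν ^ 3 - ν = 4 * k ^ 3 - k) ∧
    (∃! ν : ℂ, (ν.im ≤ 0 ∧ 12 * ν.re ^ 2 - 4 * ν.im ^ 2 ≤ 1) ∧
        4 * ν ^ 3 - ν = 4 * k ^ 3 - k) := by
  obtain ⟨w, hw⟩ := IsAlgClosed.exists_pow_nat_eq (1 - 3*k^2) (n := 2) (by norm_num)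
  have him0 : 0 ≤ k.im * (12*k.re^2 - 4*k.im^2 - 1) := by
    rcases hk with ⟨h1, h2⟩ | ⟨h1, h2⟩ <;> nlinarith
  -- every root lies in one of the three closed regions
  have hconf : ∀ ν : ℂ, 4 * ν ^ 3 - ν = 4 * k ^ 3 - k →
      (0 ≤ ν.im ∧ 0 < ν.re ∧ 1 ≤ 12 * ν.re ^ 2 - 4 * ν.im ^ 2) ∨
      (0 ≤ ν.im ∧ ν.re < 0 ∧ 1 ≤ 12 * ν.re ^ 2 - 4 * ν.im ^ 2) ∨
      (ν.im ≤ 0 ∧ 12 * ν.re ^ 2 - 4 * ν.im ^ 2 ≤ 1) := by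
    intro ν hv
    have h0 : 0 ≤ ν.im * (12*ν.re^2 - 4*ν.im^2 - 1) := by
      have := congrArg Complex.im hv
      rw [im_cubic, im_cubic] at this
      rw [this]; exact him0
    rcases lt_trichotomy ν.im 0 with hlt | heq | hgt
    · exact Or.inr (Or.inr ⟨hlt.le, by nlinarith⟩)
    · rcases le_or_gt (12 * ν.re ^ 2 - 4 * ν.im ^ 2) 1 with hle | hgt2
      · exact Or.inr (Or.inr ⟨heq.le, hle⟩)
      · have hx : ν.re ≠ 0 := by
          intro h; rw [h] at hgt2; nlinarith [sq_nonneg ν.im]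
        rcases hx.lt_or_gt with h | h
        · exact Or.inr (Or.inl ⟨heq.ge, h, hgt2.le⟩)
        · exact Or.inl ⟨heq.ge, h, hgt2.le⟩
    · have hg : 1 ≤ 12 * ν.re ^ 2 - 4 * ν.im ^ 2 := by nlinarith
      have hx : ν.re ≠ 0 := by
        intro h; rw [h] at hg; nlinarith [sq_nonneg ν.im]
      rcases hx.lt_or_gt with h | h
      · exact Or.inr (Or.inl ⟨hgt.le, h, hg⟩)
      · exact Or.inl ⟨hgt.le, h, hg⟩
  -- existence in each region
  have hex :
      (∃ ν : ℂ, ((0 ≤ ν.im ∧ 0 < ν.re ∧ 1 ≤ 12 * ν.re ^ 2 - 4 * ν.im ^ 2) ∧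
        4 * ν ^ 3 - ν = 4 * k ^ 3 - k)) ∧
      (∃ ν : ℂ, ((0 ≤ ν.im ∧ ν.re < 0 ∧ 1 ≤ 12 * ν.re ^ 2 - 4 * ν.im ^ 2) ∧
        4 * ν ^ 3 - ν = 4 * k ^ 3 - k)) ∧
      (∃ ν : ℂ, ((ν.im ≤ 0 ∧ 12 * ν.re ^ 2 - 4 * ν.im ^ 2 ≤ 1) ∧
        4 * ν ^ 3 - ν = 4 * k ^ 3 - k)) := by
    by_cases h12 : (12:ℂ) * k^2 = 1
    · -- k is a double root, k = ±1/(2√3), third root is -2k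
      obtain ⟨hki, hkr⟩ := real_of_sq_real (by norm_num : (0:ℝ) < 12) h12
      have hkre : k.re ≠ 0 := by intro h; rw [h] at hkr; norm_num at hkr
      have e2k : 4*(-2*k)^3 - (-2*k) = 4*k^3 - k := by linear_combination (-3*k) * h12
      have h2i : (-2*k).im = 0 := by simp [hki]
      have h2r : (-2*k).re = -2 * k.re := by simp
      rcases hkre.lt_or_gt with hneg | hpos
      · refine ⟨⟨-2*k, ⟨?_, ?_, ?_⟩, e2k⟩, ⟨k, ⟨by rw [hki], hneg, by nlinarith⟩, rfl⟩,
          ⟨k, ⟨by rw [hki], by nlinarith⟩, rfl⟩⟩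
        · rw [h2i]
        · rw [h2r]; nlinarith
        · rw [h2i, h2r]; nlinarith
      · refine ⟨⟨k, ⟨by rw [hki], hpos, by nlinarith⟩, rfl⟩, ⟨-2*k, ⟨?_, ?_, ?_⟩, e2k⟩,
          ⟨k, ⟨by rw [hki], by nlinarith⟩, rfl⟩⟩
        · rw [h2i]
        · rw [h2r]; nlinarith
        · rw [h2i, h2r]; nlinarith
    · by_cases h3 : (3:ℂ) * k^2 = 1
      · -- roots are k and the double root -k/2 = ∓1/(2√3)
        obtain ⟨hki, hkr⟩ := real_of_sq_real (by norm_num : (0:ℝ) < 3) h3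
        have hkre : k.re ≠ 0 := by intro h; rw [h] at hkr; norm_num at hkr
        have eh : 4*(-k/2)^3 - (-k/2) = 4*k^3 - k := by linear_combination (-(3*k)/2) * h3
        have hhi : (-k/2).im = 0 := by simp [hki]
        have hhr : (-k/2).re = -k.re / 2 := by simp
        rcases hkre.lt_or_gt with hneg | hpos
        · refine ⟨⟨-k/2, ⟨?_, ?_, ?_⟩, eh⟩, ⟨k, ⟨by rw [hki], hneg, by nlinarith⟩, rfl⟩,
            ⟨-k/2, ⟨?_, ?_⟩, eh⟩⟩
          · rw [hhi]
          · rw [hhr]; nlinarith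
          · rw [hhi, hhr]; nlinarith
          · rw [hhi]
          · rw [hhi, hhr]; nlinarith
        · refine ⟨⟨k, ⟨by rw [hki], hpos, by nlinarith⟩, rfl⟩, ⟨-k/2, ⟨?_, ?_, ?_⟩, eh⟩,
            ⟨-k/2, ⟨?_, ?_⟩, eh⟩⟩
          · rw [hhi]
          · rw [hhr]; nlinarith
          · rw [hhi, hhr]; nlinarith
          · rw [hhi]
          · rw [hhi, hhr]; nlinarith
      · -- three distinct roots k, (-k+w)/2, (-k-w)/2
        set b := (-k + w)/2 with hb
        set c := (-k - w)/2 with hc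
        have eb : 4*b^3 - b = 4*k^3 - k := by rw [hb]; linear_combination ((-3*k + w)/2) * hw
        have ec : 4*c^3 - c = 4*k^3 - k := by rw [hc]; linear_combination ((-3*k - w)/2) * hw
        have hkb : k ≠ b := by
          intro h; rw [hb] at h
          have hw3 : w = 3*k := by linear_combination (-2) * h
          exact h12 (by linear_combination hw - (w + 3*k) * hw3)
        have hkc : k ≠ c := by
          intro h; rw [hc] at h
          have hw3 : w = -(3*k) := by linear_combination 2 * h
          exact h12 (by linear_combination hw - (w - 3*k) * hw3)
        have hbc : b ≠ c := by
          intro h; rw [hb, hc] at h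
          have hw0 : w = 0 := by linear_combination h
          exact h3 (by linear_combination hw - w * hw0)
        have ek : 4*k^3 - k = 4*k^3 - k := rfl
        refine ⟨?_, ?_, ?_⟩
        · by_contra hA
          push_neg at hA
          refine pigeon (P := fun ν => (0 ≤ ν.im ∧ ν.re < 0 ∧ 1 ≤ 12*ν.re^2 - 4*ν.im^2) ∧
              4*ν^3 - ν = 4*k^3 - k)
            (Q := fun ν => (ν.im ≤ 0 ∧ 12*ν.re^2 - 4*ν.im^2 ≤ 1) ∧
              4*ν^3 - ν = 4*k^3 - k) hkb hkc hbc ?_ ?_ ?_ ?_ ?_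
          · rcases hconf k ek with h | h | h
            · exact absurd ek (hA k h)
            · exact Or.inl ⟨h, ek⟩
            · exact Or.inr ⟨h, ek⟩
          · rcases hconf b eb with h | h | h
            · exact absurd eb (hA b h)
            · exact Or.inl ⟨h, eb⟩
            · exact Or.inr ⟨h, eb⟩
          · rcases hconf c ec with h | h | h
            · exact absurd ec (hA c h)
            · exact Or.inl ⟨h, ec⟩
            · exact Or.inr ⟨h, ec⟩
          · rintro x y ⟨⟨x1, x2, x3⟩, ex⟩ ⟨⟨y1, y2, y3⟩, ey⟩
            exact injB x y x1 x2 x3 y1 y2 y3 (ex.trans ey.symm)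
          · rintro x y ⟨⟨x1, x3⟩, ex⟩ ⟨⟨y1, y3⟩, ey⟩
            exact injC x y x1 x3 y1 y3 (ex.trans ey.symm)
        · by_contra hB
          push_neg at hB
          refine pigeon (P := fun ν => (0 ≤ ν.im ∧ 0 < ν.re ∧ 1 ≤ 12*ν.re^2 - 4*ν.im^2) ∧
              4*ν^3 - ν = 4*k^3 - k)
            (Q := fun ν => (ν.im ≤ 0 ∧ 12*ν.re^2 - 4*ν.im^2 ≤ 1) ∧
              4*ν^3 - ν = 4*k^3 - k) hkb hkc hbc ?_ ?_ ?_ ?_ ?_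
          · rcases hconf k ek with h | h | h
            · exact Or.inl ⟨h, ek⟩
            · exact absurd ek (hB k h)
            · exact Or.inr ⟨h, ek⟩
          · rcases hconf b eb with h | h | h
            · exact Or.inl ⟨h, eb⟩
            · exact absurd eb (hB b h)
            · exact Or.inr ⟨h, eb⟩
          · rcases hconf c ec with h | h | h
            · exact Or.inl ⟨h, ec⟩
            · exact absurd ec (hB c h)
            · exact Or.inr ⟨h, ec⟩
          · rintro x y ⟨⟨x1, x2, x3⟩, ex⟩ ⟨⟨y1, y2, y3⟩, ey⟩
            exact injA x y x1 x2 x3 y1 y2 y3 (ex.trans ey.symm)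
          · rintro x y ⟨⟨x1, x3⟩, ex⟩ ⟨⟨y1, y3⟩, ey⟩
            exact injC x y x1 x3 y1 y3 (ex.trans ey.symm)
        · by_contra hC
          push_neg at hC
          refine pigeon (P := fun ν => (0 ≤ ν.im ∧ 0 < ν.re ∧ 1 ≤ 12*ν.re^2 - 4*ν.im^2) ∧
              4*ν^3 - ν = 4*k^3 - k)
            (Q := fun ν => (0 ≤ ν.im ∧ ν.re < 0 ∧ 1 ≤ 12*ν.re^2 - 4*ν.im^2) ∧
              4*ν^3 - ν = 4*k^3 - k) hkb hkc hbc ?_ ?_ ?_ ?_ ?_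
          · rcases hconf k ek with h | h | h
            · exact Or.inl ⟨h, ek⟩
            · exact Or.inr ⟨h, ek⟩
            · exact absurd ek (hC k h)
          · rcases hconf b eb with h | h | h
            · exact Or.inl ⟨h, eb⟩
            · exact Or.inr ⟨h, eb⟩
            · exact absurd eb (hC b h)
          · rcases hconf c ec with h | h | h
            · exact Or.inl ⟨h, ec⟩
            · exact Or.inr ⟨h, ec⟩
            · exact absurd ec (hC c h)
          · rintro x y ⟨⟨x1, x2, x3⟩, ex⟩ ⟨⟨y1, y2, y3⟩, ey⟩
            exact injA x y x1 x2 x3 y1 y2 y3 (ex.trans ey.symm)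
          · rintro x y ⟨⟨x1, x2, x3⟩, ex⟩ ⟨⟨y1, y2, y3⟩, ey⟩
            exact injB x y x1 x2 x3 y1 y2 y3 (ex.trans ey.symm)
  obtain ⟨⟨va, ⟨ha1, ha2, ha3⟩, hae⟩, ⟨vb, ⟨hb1, hb2, hb3⟩, hbe⟩, ⟨vc, ⟨hc1, hc3⟩, hce⟩⟩ := hex
  refine ⟨⟨va, ⟨⟨ha1, ha2, ha3⟩, hae⟩, ?_⟩, ⟨vb, ⟨⟨hb1, hb2, hb3⟩, hbe⟩, ?_⟩,
    ⟨vc, ⟨⟨hc1, hc3⟩, hce⟩, ?_⟩⟩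
  · rintro ν ⟨⟨n1, n2, n3⟩, ne⟩
    exact injA ν va n1 n2 n3 ha1 ha2 ha3 (ne.trans hae.symm)
  · rintro ν ⟨⟨n1, n2, n3⟩, ne⟩
    exact injB ν vb n1 n2 n3 hb1 hb2 hb3 (ne.trans hbe.symm)
  · rintro ν ⟨⟨n1, n3⟩, ne⟩
    exact injC ν vc n1 n3 hc1 hc3 (ne.trans hce.symm)
end

section
/- Let c be a nonzero real number and set a = 1/(2√3). Then the cubic polynomial 4k³ − k + c has exactly one root in each of the following three subsets of ℂ (writing k = x + iy): the set ∂D₃ consisting of the real segment [−a, a] together with the two arcs of the hyperbola 12x² − 4y² = 1 with y ≤ 0; the set ∂D₁' consisting of the real ray [a, ∞) together with the arc of the hyperbola 12x² − 4y² = 1 with x > 0 and y ≥ 0; and the set ∂D₁'' consisting of the real ray (−∞, −a] together with the arc of the hyperbola 12x² − 4y² = 1 with x < 0 and y ≥ 0. In particular, for every real ω ≠ 0 there is a unique K ∈ ∂D₃ with 4K³ − K + ω/2 = 0 and a unique L ∈ ∂D₃ with 4L³ − L + ω = 0. -/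
open Set

noncomputable section

/-- `a = 1/(2√3)`. -/
def aKdV : ℝ := 1 / (2 * Real.sqrt 3)

/-- The set `∂D₃ ⊆ ℂ`: the real segment `[−a,a]` together with the two hyperbola arcs
`12x² − 4y² = 1` with `y ≤ 0`. -/
def bD3 : Set ℂ :=
  {k | (k.im = 0 ∧ |k.re| ≤ aKdV) ∨ (k.im ≤ 0 ∧ 12 * k.re ^ 2 - 4 * k.im ^ 2 = 1)}

/-- The set `∂D₁' ⊆ ℂ`: the real ray `[a,∞)` together with the hyperbola arc
`12x² − 4y² = 1` with `x > 0`, `y ≥ 0`. -/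
def bD1' : Set ℂ :=
  {k | (k.im = 0 ∧ aKdV ≤ k.re) ∨
       (0 ≤ k.im ∧ 0 < k.re ∧ 12 * k.re ^ 2 - 4 * k.im ^ 2 = 1)}

/-- The set `∂D₁'' ⊆ ℂ`: the real ray `(−∞,−a]` together with the hyperbola arc
`12x² − 4y² = 1` with `x < 0`, `y ≥ 0`. -/
def bD1'' : Set ℂ :=
  {k | (k.im = 0 ∧ k.re ≤ -aKdV) ∨
       (0 ≤ k.im ∧ k.re < 0 ∧ 12 * k.re ^ 2 - 4 * k.im ^ 2 = 1)}

/-! ### Auxiliary lemmas -/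

lemma aKdV_pos : 0 < aKdV := by unfold aKdV; positivity

lemma aKdV_sq : aKdV ^ 2 = 1/12 := by
  unfold aKdV
  rw [div_pow, mul_pow, Real.sq_sqrt (by norm_num : (3:ℝ) ≥ 0)]
  norm_num

lemma aKdV_le_half : aKdV ≤ 1/2 := by nlinarith [aKdV_sq, aKdV_pos]

lemma root_parts {c : ℝ} {k : ℂ} (h : 4 * k ^ 3 - k + (c:ℂ) = 0) :
    (4*(k.re^3 - 3*k.re*k.im^2) - k.re + c = 0) ∧
    (k.im * (12*k.re^2 - 4*k.im^2 - 1) = 0) := by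
  rw [Complex.ext_iff] at h
  simp [Complex.mul_re, Complex.mul_im, pow_succ] at h
  constructor <;> nlinarith [h.1, h.2]

lemma abs_eq_a {x : ℝ} (h : 12 * x ^ 2 - 4 * 0 ^ 2 = 1) : |x| = aKdV := by
  have h2 : x^2 = aKdV^2 := by rw [aKdV_sq]; nlinarith
  have := abs_eq_abs.mpr (sq_eq_sq_iff_eq_or_eq_neg.mp h2)
  rwa [abs_of_pos aKdV_pos] at this

lemma mem_bD3_real {k : ℂ} (h : k.im = 0) : k ∈ bD3 ↔ |k.re| ≤ aKdV := by
  constructor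
  · rintro (⟨_, h2⟩ | ⟨_, h2⟩)
    · exact h2
    · rw [h] at h2; exact (abs_eq_a h2).le
  · intro h2; exact Or.inl ⟨h, h2⟩

lemma mem_bD1'_real {k : ℂ} (h : k.im = 0) : k ∈ bD1' ↔ aKdV ≤ k.re := by
  constructor
  · rintro (⟨_, h2⟩ | ⟨_, hp, h2⟩)
    · exact h2
    · rw [h] at h2
      have := abs_eq_a h2
      rw [abs_of_pos hp] at this; exact this.ge
  · intro h2; exact Or.inl ⟨h, h2⟩

lemma mem_bD1''_real {k : ℂ} (h : k.im = 0) : k ∈ bD1'' ↔ k.re ≤ -aKdV := by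
  constructor
  · rintro (⟨_, h2⟩ | ⟨_, hp, h2⟩)
    · exact h2
    · rw [h] at h2
      have := abs_eq_a h2
      rw [abs_of_neg hp] at this; linarith
  · intro h2; exact Or.inl ⟨h, h2⟩

lemma real_root_iff (c x : ℝ) : 4 * (x:ℂ) ^ 3 - (x:ℂ) + (c:ℂ) = 0 ↔ 4*x^3 - x + c = 0 := by
  rw [show 4 * (x:ℂ) ^ 3 - (x:ℂ) + (c:ℂ) = ((4*x^3 - x + c : ℝ) : ℂ) by push_cast; ring]
  exact_mod_cast Complex.ofReal_eq_zero

lemma ivt_up (c lo hi : ℝ) (hle : lo ≤ hi) (h1 : 4*lo^3 - lo + c ≤ 0)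
    (h2 : 0 ≤ 4*hi^3 - hi + c) : ∃ r ∈ Icc lo hi, 4*r^3 - r + c = 0 := by
  have hc : ContinuousOn (fun x : ℝ => 4*x^3 - x + c) (Icc lo hi) := by fun_prop
  obtain ⟨r, hr, hr0⟩ := intermediate_value_Icc hle hc (Set.mem_Icc.mpr ⟨h1, h2⟩)
  exact ⟨r, hr, hr0⟩

lemma ivt_down (c lo hi : ℝ) (hle : lo ≤ hi) (h1 : 0 ≤ 4*lo^3 - lo + c)
    (h2 : 4*hi^3 - hi + c ≤ 0) : ∃ r ∈ Icc lo hi, 4*r^3 - r + c = 0 := by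
  have hc : ContinuousOn (fun x : ℝ => 4*x^3 - x + c) (Icc lo hi) := by fun_prop
  obtain ⟨r, hr, hr0⟩ := intermediate_value_Icc' hle hc (Set.mem_Icc.mpr ⟨h2, h1⟩)
  exact ⟨r, hr, hr0⟩

lemma uniq_mid {c x y : ℝ} (hx : 4*x^3 - x + c = 0) (hy : 4*y^3 - y + c = 0)
    (hx2 : x^2 ≤ 1/12) (hy2 : y^2 ≤ 1/12) : x = y := by
  have key : (x - y) * (4*(x^2 + x*y + y^2) - 1) = 0 := by linear_combination hx - hy
  rcases mul_eq_zero.mp key with h | h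
  · linarith [sub_eq_zero.mp h]
  · have h3 : (x - y)^2 = 0 := le_antisymm (by nlinarith) (sq_nonneg _)
    have := pow_eq_zero_iff (n := 2) (by norm_num) |>.mp h3
    linarith

lemma uniq_right {c x y : ℝ} (hx : 4*x^3 - x + c = 0) (hy : 4*y^3 - y + c = 0)
    (hxa : aKdV ≤ x) (hya : aKdV ≤ y) : x = y := by
  have ha := aKdV_pos
  have ha2 := aKdV_sq
  have key : (x - y) * (4*(x^2 + x*y + y^2) - 1) = 0 := by linear_combination hx - hy
  rcases mul_eq_zero.mp key with h | h
  · linarith [sub_eq_zero.mp h]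
  · have hxy : 1/12 ≤ x*y := by
      nlinarith [mul_nonneg (by linarith : (0:ℝ) ≤ x - aKdV) (by linarith : (0:ℝ) ≤ y - aKdV)]
    have h3 : (x - y)^2 = 0 := le_antisymm (by nlinarith) (sq_nonneg _)
    have := pow_eq_zero_iff (n := 2) (by norm_num) |>.mp h3
    linarith

lemma uniq_left {c x y : ℝ} (hx : 4*x^3 - x + c = 0) (hy : 4*y^3 - y + c = 0)
    (hxa : x ≤ -aKdV) (hya : y ≤ -aKdV) : x = y := by
  have := uniq_right (c := -c) (x := -x) (y := -y)
    (by linear_combination -hx) (by linear_combination -hy) (by linarith) (by linarith)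
  linarith

lemma nonreal_c_big {c x y : ℝ} (hre : 4*(x^3 - 3*x*y^2) - x + c = 0)
    (hhyp : 12*x^2 - 4*y^2 = 1) (hy : y ≠ 0) : 1/27 < c^2 := by
  have hy2 : 0 < y^2 := by positivity
  have ht : 1/12 < x^2 := by nlinarith
  have hc : c = 32*x^3 - 2*x := by linear_combination hre - 3*x*hhyp
  have key : c^2 - 1/27 = 1024*((x^2 - 1/12)*(x^2 - 1/48)^2) := by rw [hc]; ring
  nlinarith [mul_pos (by linarith : (0:ℝ) < x^2 - 1/12)
    (mul_pos (by linarith : (0:ℝ) < x^2 - 1/48) (by linarith : (0:ℝ) < x^2 - 1/48))]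

lemma real_root_big {c r : ℝ} (hr : 4*r^3 - r + c = 0) (hc : 1/27 < c^2) : 1/3 < r^2 := by
  by_contra h
  push_neg at h
  have hc' : c = r*(1-4*r^2) := by linear_combination hr
  have key : 1/27 - c^2 = 16*((r^2 - 1/12)^2*(1/3 - r^2)) := by rw [hc']; ring
  nlinarith [mul_nonneg (sq_nonneg (r^2 - 1/12)) (by linarith : (0:ℝ) ≤ 1/3 - r^2)]

set_option maxHeartbeats 1000000 in
/-- Case `c² ≤ 1/27`: all three roots are real and there is one in each interval. -/
lemma case_small (c : ℝ) (h27 : c^2 ≤ 1/27) :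
    (∃! k : ℂ, k ∈ bD3 ∧ 4 * k ^ 3 - k + (c:ℂ) = 0) ∧
    (∃! k : ℂ, k ∈ bD1' ∧ 4 * k ^ 3 - k + (c:ℂ) = 0) ∧
    (∃! k : ℂ, k ∈ bD1'' ∧ 4 * k ^ 3 - k + (c:ℂ) = 0) := by
  have ha := aKdV_pos
  have ha2 := aKdV_sq
  have h4a3 : 4*aKdV^3 = aKdV/3 := by linear_combination (4*aKdV) * aKdV_sq
  -- all roots are real
  have hreal : ∀ k : ℂ, 4 * k ^ 3 - k + (c:ℂ) = 0 → k.im = 0 := by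
    intro k hk
    obtain ⟨h1, h2⟩ := root_parts hk
    rcases mul_eq_zero.mp h2 with h | h
    · exact h
    · by_contra hy
      exact absurd h27 (not_le.mpr (nonreal_c_big h1 (by linarith) hy))
  have hrealeq : ∀ k : ℂ, k.im = 0 → 4 * k ^ 3 - k + (c:ℂ) = 0 →
      4*k.re^3 - k.re + c = 0 := by
    intro k him hk
    have hkre : k = (k.re : ℂ) := Complex.ext rfl (by simp [him])
    rw [hkre] at hk
    exact (real_root_iff c k.re).mp hk
  -- bounds on c
  have hcub : c ≤ 2*aKdV/3 := by nlinarith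
  have hclb : -(2*aKdV/3) ≤ c := by nlinarith
  -- values of g at ±a
  have hga : 4*aKdV^3 - aKdV + c ≤ 0 := by linarith
  have hgna : 0 ≤ 4*(-aKdV)^3 - (-aKdV) + c := by
    have : 4*(-aKdV)^3 - (-aKdV) + c = -(4*aKdV^3) + aKdV + c := by ring
    rw [this]; linarith
  -- large M
  set M : ℝ := |c| + 1 with hMdef
  have hM1 : 1 ≤ M := by have := abs_nonneg c; linarith
  have haM : aKdV ≤ M := by linarith [aKdV_le_half]
  have hgM : 0 ≤ 4*M^3 - M + c := by
    have h1 : -M + 1 ≤ c := by have := neg_abs_le c; linarith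
    nlinarith [sq_nonneg M, mul_nonneg (by linarith : (0:ℝ) ≤ M - 1) (sq_nonneg M)]
  have hgnM : 4*(-M)^3 - (-M) + c ≤ 0 := by
    have h1 : c ≤ M - 1 := by have := le_abs_self c; linarith
    nlinarith [mul_nonneg (by linarith : (0:ℝ) ≤ M - 1) (sq_nonneg M)]
  -- the three real roots
  obtain ⟨ρ1, hρ1I, hρ1⟩ := ivt_up c (-M) (-aKdV) (by linarith) hgnM hgna
  obtain ⟨ρ2, hρ2I, hρ2⟩ := ivt_down c (-aKdV) aKdV (by linarith) hgna hga
  obtain ⟨ρ3, hρ3I, hρ3⟩ := ivt_up c aKdV M haM hga hgM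
  obtain ⟨hρ1l, hρ1r⟩ := Set.mem_Icc.mp hρ1I
  obtain ⟨hρ2l, hρ2r⟩ := Set.mem_Icc.mp hρ2I
  obtain ⟨hρ3l, hρ3r⟩ := Set.mem_Icc.mp hρ3I
  refine ⟨⟨(ρ2:ℂ), ⟨?_, (real_root_iff c ρ2).mpr hρ2⟩, ?_⟩,
         ⟨(ρ3:ℂ), ⟨?_, (real_root_iff c ρ3).mpr hρ3⟩, ?_⟩,
         ⟨(ρ1:ℂ), ⟨?_, (real_root_iff c ρ1).mpr hρ1⟩, ?_⟩⟩
  · exact (mem_bD3_real (by simp)).mpr (by simpa using abs_le.mpr ⟨hρ2l, hρ2r⟩)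
  · rintro k ⟨hkm, hkeq⟩
    have him := hreal k hkeq
    have hre := hrealeq k him hkeq
    have habs := (mem_bD3_real him).mp hkm
    obtain ⟨hl, hr⟩ := abs_le.mp habs
    have : k.re = ρ2 := uniq_mid hre hρ2 (by nlinarith) (by nlinarith)
    exact Complex.ext (by simpa using this) (by simpa using him)
  · exact (mem_bD1'_real (by simp)).mpr (by simpa using hρ3l)
  · rintro k ⟨hkm, hkeq⟩
    have him := hreal k hkeq
    have hre := hrealeq k him hkeq
    have hge := (mem_bD1'_real him).mp hkm
    have : k.re = ρ3 := uniq_right hre hρ3 hge hρ3l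
    exact Complex.ext (by simpa using this) (by simpa using him)
  · exact (mem_bD1''_real (by simp)).mpr (by simpa using hρ1r)
  · rintro k ⟨hkm, hkeq⟩
    have him := hreal k hkeq
    have hre := hrealeq k him hkeq
    have hle := (mem_bD1''_real him).mp hkm
    have : k.re = ρ1 := uniq_left hre hρ1 hle hρ1r
    exact Complex.ext (by simpa using this) (by simpa using him)

set_option maxHeartbeats 2000000 in
/-- Case `1/27 < c²`: one real root beyond ±2a and a conjugate pair on the hyperbola. -/
lemma case_big (c : ℝ) (h27 : 1/27 < c^2) :
    (∃! k : ℂ, k ∈ bD3 ∧ 4 * k ^ 3 - k + (c:ℂ) = 0) ∧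
    (∃! k : ℂ, k ∈ bD1' ∧ 4 * k ^ 3 - k + (c:ℂ) = 0) ∧
    (∃! k : ℂ, k ∈ bD1'' ∧ 4 * k ^ 3 - k + (c:ℂ) = 0) := by
  have ha := aKdV_pos
  have ha2 := aKdV_sq
  -- get the real root
  obtain ⟨r, hr⟩ : ∃ r : ℝ, 4*r^3 - r + c = 0 := by
    obtain ⟨M, hM1, hMdef⟩ : ∃ M : ℝ, 1 ≤ M ∧ M = |c| + 1 := ⟨|c| + 1, by linarith [abs_nonneg c], rfl⟩
    have hgM : 0 ≤ 4*M^3 - M + c := by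
      have h1 : -M + 1 ≤ c := by have := neg_abs_le c; linarith [hMdef ▸ le_refl M]
      nlinarith [mul_nonneg (by linarith : (0:ℝ) ≤ M - 1) (sq_nonneg M)]
    have hgnM : 4*(-M)^3 - (-M) + c ≤ 0 := by
      have h1 : c ≤ M - 1 := by have := le_abs_self c; linarith [hMdef ▸ le_refl M]
      nlinarith [mul_nonneg (by linarith : (0:ℝ) ≤ M - 1) (sq_nonneg M)]
    obtain ⟨r, _, hr⟩ := ivt_up c (-M) M (by linarith) hgnM hgM
    exact ⟨r, hr⟩
  have hr3 : 1/3 < r^2 := real_root_big hr h27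
  -- the conjugate pair
  obtain ⟨y, hy0, hy2⟩ : ∃ y : ℝ, 0 < y ∧ 4*y^2 = 3*r^2 - 1 := by
    refine ⟨Real.sqrt (3*r^2 - 1) / 2, ?_, ?_⟩
    · have : 0 < Real.sqrt (3*r^2 - 1) := Real.sqrt_pos.mpr (by linarith)
      linarith
    · rw [div_pow, Real.sq_sqrt (by linarith : (0:ℝ) ≤ 3*r^2 - 1)]
      ring
  obtain ⟨x, hxC⟩ : ∃ x : ℝ, x = -r/2 := ⟨-r/2, rfl⟩
  obtain ⟨K1, hK1def⟩ : ∃ K : ℂ, K = (x:ℂ) + (y:ℂ)*Complex.I := ⟨_, rfl⟩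
  obtain ⟨K2, hK2def⟩ : ∃ K : ℂ, K = (x:ℂ) - (y:ℂ)*Complex.I := ⟨_, rfl⟩
  have hK1re : K1.re = x := by rw [hK1def]; simp
  have hK1im : K1.im = y := by rw [hK1def]; simp
  have hK2re : K2.re = x := by rw [hK2def]; simp
  have hK2im : K2.im = -y := by rw [hK2def]; simp
  have hx2 : x^2 = r^2/4 := by rw [hxC]; ring
  have hhyp : 12*x^2 - 4*y^2 = 1 := by rw [hx2]; linarith
  -- factorization
  have hcC : (c:ℂ) = (r:ℂ) - 4*(r:ℂ)^3 := by
    have h : c = r - 4*r^3 := by linarith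
    exact_mod_cast congrArg (fun t : ℝ => (t:ℂ)) h
  have hy2C : 4*(y:ℂ)^2 = 3*(r:ℂ)^2 - 1 := by
    exact_mod_cast congrArg (fun t : ℝ => (t:ℂ)) hy2
  have hxC' : (x:ℂ) = -(r:ℂ)/2 := by rw [hxC]; push_cast; ring
  have key : ∀ k : ℂ, 4 * k ^ 3 - k + (c:ℂ) = 4*(k - r) * ((k - K1)*(k - K2)) := by
    intro k
    rw [hK1def, hK2def, hxC']
    linear_combination hcC - (k - (r:ℂ))*hy2C + (4*(k - (r:ℂ))*(y:ℂ)^2)*Complex.I_sq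
  have hroots : ∀ k : ℂ, 4 * k ^ 3 - k + (c:ℂ) = 0 → k = (r:ℂ) ∨ k = K1 ∨ k = K2 := by
    intro k hk
    rw [key k] at hk
    rcases mul_eq_zero.mp hk with h | h
    · rcases mul_eq_zero.mp h with h' | h'
      · exact absurd h' (by norm_num)
      · exact Or.inl (sub_eq_zero.mp h')
    · rcases mul_eq_zero.mp h with h' | h'
      · exact Or.inr (Or.inl (sub_eq_zero.mp h'))
      · exact Or.inr (Or.inr (sub_eq_zero.mp h'))
  -- the three points are roots
  have hrroot : 4 * (r:ℂ) ^ 3 - (r:ℂ) + (c:ℂ) = 0 := (real_root_iff c r).mpr hr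
  have hK1root : 4 * K1 ^ 3 - K1 + (c:ℂ) = 0 := by rw [key K1]; ring
  have hK2root : 4 * K2 ^ 3 - K2 + (c:ℂ) = 0 := by rw [key K2]; ring
  -- K2 is always the bD3 root
  have hK2mem : K2 ∈ bD3 := Or.inr (by rw [hK2re, hK2im]; constructor <;> [linarith; nlinarith])
  have hbD3 : ∃! k : ℂ, k ∈ bD3 ∧ 4 * k ^ 3 - k + (c:ℂ) = 0 := by
    refine ⟨K2, ⟨hK2mem, hK2root⟩, ?_⟩
    rintro k ⟨hkm, hkeq⟩
    rcases hroots k hkeq with rfl | rfl | rfl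
    · exfalso
      have habs := (mem_bD3_real (by simp)).mp hkm
      simp only [Complex.ofReal_re] at habs
      have h1 := abs_le.mp habs
      nlinarith [h1.1, h1.2]
    · exfalso
      rcases hkm with ⟨h0, _⟩ | ⟨h0, _⟩ <;> rw [hK1im] at h0 <;> linarith
    · rfl
  refine ⟨hbD3, ?_, ?_⟩ <;> rcases lt_trichotomy c 0 with hc | hc | hc
  -- bD1', c < 0 : real root r ≥ a
  · have hrpos : 0 < r := by
      by_contra hcon; push_neg at hcon
      nlinarith [mul_nonneg (by linarith : (0:ℝ) ≤ -r) (by linarith : (0:ℝ) ≤ 4*r^2 - 1)]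
    have hra : aKdV < r := by
      by_contra hcon; push_neg at hcon
      nlinarith [mul_nonneg (by linarith : (0:ℝ) ≤ aKdV - r) (by linarith : (0:ℝ) ≤ r),
        mul_nonneg ha.le (by linarith : (0:ℝ) ≤ aKdV - r)]
    refine ⟨(r:ℂ), ⟨(mem_bD1'_real (by simp)).mpr (by simpa using hra.le), hrroot⟩, ?_⟩
    rintro k ⟨hkm, hkeq⟩
    rcases hroots k hkeq with rfl | rfl | rfl
    · rfl
    · exfalso
      have hx0 : x < 0 := by rw [hxC]; linarith
      rcases hkm with ⟨h0, _⟩ | ⟨_, h0, _⟩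
      · rw [hK1im] at h0; linarith
      · rw [hK1re] at h0; linarith
    · exfalso
      rcases hkm with ⟨h0, _⟩ | ⟨h0, _, _⟩ <;> rw [hK2im] at h0 <;> linarith
  · exact absurd h27 (by rw [hc]; norm_num)
  -- bD1', c > 0 : K1 with x > 0
  · have hrneg : r < 0 := by
      by_contra hcon; push_neg at hcon
      nlinarith [mul_nonneg hcon (by linarith : (0:ℝ) ≤ 4*r^2 - 1)]
    have hra : r < -aKdV := by
      by_contra hcon; push_neg at hcon
      nlinarith [mul_nonneg (by linarith : (0:ℝ) ≤ r + aKdV) (by linarith : (0:ℝ) ≤ -r),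
        mul_nonneg ha.le (by linarith : (0:ℝ) ≤ r + aKdV)]
    have hx0 : 0 < x := by rw [hxC]; linarith
    refine ⟨K1, ⟨Or.inr ⟨by rw [hK1im]; linarith, by rw [hK1re]; exact hx0,
      by rw [hK1re, hK1im]; linarith⟩, hK1root⟩, ?_⟩
    rintro k ⟨hkm, hkeq⟩
    rcases hroots k hkeq with rfl | rfl | rfl
    · exfalso
      have := (mem_bD1'_real (by simp)).mp hkm
      simp only [Complex.ofReal_re] at this
      linarith
    · rfl
    · exfalso
      rcases hkm with ⟨h0, _⟩ | ⟨h0, _, _⟩ <;> rw [hK2im] at h0 <;> linarith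
  -- bD1'', c < 0 : K1 with x < 0
  · have hrpos : 0 < r := by
      by_contra hcon; push_neg at hcon
      nlinarith [mul_nonneg (by linarith : (0:ℝ) ≤ -r) (by linarith : (0:ℝ) ≤ 4*r^2 - 1)]
    have hra : aKdV < r := by
      by_contra hcon; push_neg at hcon
      nlinarith [mul_nonneg (by linarith : (0:ℝ) ≤ aKdV - r) (by linarith : (0:ℝ) ≤ r),
        mul_nonneg ha.le (by linarith : (0:ℝ) ≤ aKdV - r)]
    have hx0 : x < 0 := by rw [hxC]; linarith
    refine ⟨K1, ⟨Or.inr ⟨by rw [hK1im]; linarith, by rw [hK1re]; exact hx0,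
      by rw [hK1re, hK1im]; linarith⟩, hK1root⟩, ?_⟩
    rintro k ⟨hkm, hkeq⟩
    rcases hroots k hkeq with rfl | rfl | rfl
    · exfalso
      have := (mem_bD1''_real (by simp)).mp hkm
      simp only [Complex.ofReal_re] at this
      linarith
    · rfl
    · exfalso
      rcases hkm with ⟨h0, _⟩ | ⟨h0, _, _⟩ <;> rw [hK2im] at h0 <;> linarith
  · exact absurd h27 (by rw [hc]; norm_num)
  -- bD1'', c > 0 : real root r ≤ -a
  · have hrneg : r < 0 := by
      by_contra hcon; push_neg at hcon
      nlinarith [mul_nonneg hcon (by linarith : (0:ℝ) ≤ 4*r^2 - 1)]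
    have hra : r < -aKdV := by
      by_contra hcon; push_neg at hcon
      nlinarith [mul_nonneg (by linarith : (0:ℝ) ≤ r + aKdV) (by linarith : (0:ℝ) ≤ -r),
        mul_nonneg ha.le (by linarith : (0:ℝ) ≤ r + aKdV)]
    refine ⟨(r:ℂ), ⟨(mem_bD1''_real (by simp)).mpr (by simpa using hra.le), hrroot⟩, ?_⟩
    rintro k ⟨hkm, hkeq⟩
    rcases hroots k hkeq with rfl | rfl | rfl
    · rfl
    · exfalso
      have hx0 : 0 < x := by rw [hxC]; linarith
      rcases hkm with ⟨h0, _⟩ | ⟨_, h0, _⟩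
      · rw [hK1im] at h0; linarith
      · rw [hK1re] at h0; linarith
    · exfalso
      have hx0 : 0 < x := by rw [hxC]; linarith
      rcases hkm with ⟨h0, _⟩ | ⟨_, h0, _⟩
      · rw [hK2im] at h0; linarith
      · rw [hK2re] at h0; linarith

lemma main_lemma (c : ℝ) :
    (∃! k : ℂ, k ∈ bD3 ∧ 4 * k ^ 3 - k + (c:ℂ) = 0) ∧
    (∃! k : ℂ, k ∈ bD1' ∧ 4 * k ^ 3 - k + (c:ℂ) = 0) ∧
    (∃! k : ℂ, k ∈ bD1'' ∧ 4 * k ^ 3 - k + (c:ℂ) = 0) := by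
  rcases le_or_gt (c^2) (1/27) with h | h
  · exact case_small c h
  · exact case_big c h

/-- for every nonzero real `c`, the cubic `4k³ − k + c` has exactly one root in
each of the three boundary contours `∂D₃`, `∂D₁'`, `∂D₁''`.  In particular, for every real
`ω ≠ 0` there is a unique `K ∈ ∂D₃` with `4K³ − K + ω/2 = 0` and a unique `L ∈ ∂D₃` with
`4L³ − L + ω = 0`. -/
theorem cubic_roots_on_boundaries :
    (∀ c : ℝ, c ≠ 0 →
      (∃! k : ℂ, k ∈ bD3 ∧ 4 * k ^ 3 - k + (c:ℂ) = 0) ∧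
      (∃! k : ℂ, k ∈ bD1' ∧ 4 * k ^ 3 - k + (c:ℂ) = 0) ∧
      (∃! k : ℂ, k ∈ bD1'' ∧ 4 * k ^ 3 - k + (c:ℂ) = 0)) ∧
    (∀ ω : ℝ, ω ≠ 0 →
      (∃! K : ℂ, K ∈ bD3 ∧ 4 * K ^ 3 - K + (ω:ℂ)/2 = 0) ∧
      (∃! L : ℂ, L ∈ bD3 ∧ 4 * L ^ 3 - L + (ω:ℂ) = 0)) := by
  constructor
  · intro c _
    exact main_lemma c
  · intro ω _
    constructor
    · have h := (main_lemma (ω/2)).1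
      have : ((ω/2 : ℝ) : ℂ) = (ω:ℂ)/2 := by push_cast; ring
      rwa [this] at h
    · exact (main_lemma ω).1

end
end

section
/- For every complex number w with Re w ≤ 0 there exists a unique κ in the closure of D₃ such that 2i(4κ³ − κ) = w; explicitly, writing κ = x + iy, there is exactly one κ with y ≤ 0 and 12x² − 4y² ≤ 1 satisfying 2i(4κ³ − κ) = w. -/
open Polynomial in
lemma exists_cubic_root (c : ℂ) : ∃ z : ℂ, 4*z^3 - z = c := by
  have h3 : (X^3 + C (-(1:ℂ)/4) * X + C (-(c/4))).degree = 3 := by compute_degree!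
  obtain ⟨z, hz⟩ := Complex.exists_root (f := X^3 + C (-(1:ℂ)/4) * X + C (-(c/4)))
    (by rw [h3]; norm_num)
  refine ⟨z, ?_⟩
  simp only [Polynomial.IsRoot, Polynomial.eval_add, Polynomial.eval_mul,
    Polynomial.eval_pow, Polynomial.eval_X, Polynomial.eval_C] at hz
  linear_combination 4*hz

lemma im_cubic_s17 (κ : ℂ) : (4*κ^3 - κ).im = κ.im * (12*κ.re^2 - 4*κ.im^2 - 1) := by
  simp [pow_succ, Complex.mul_im, Complex.mul_re]
  ring

lemma re_2I (z : ℂ) : (2*Complex.I*z).re = -2*z.im := by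
  simp [Complex.mul_re, Complex.mul_im]

lemma keyReal (x1 x2 x3 : ℝ) (hs : x1 + x2 + x3 = 0)
    (hq : x1*x2 + x1*x3 + x2*x3 = -(1/4))
    (a1 : 1/12 < x1^2) (a2 : 1/12 < x2^2) (a3 : 1/12 < x3^2) : False := by
  have hx3 : x3 = -x1 - x2 := by linarith
  subst hx3
  have hq' : x1^2 + x1*x2 + x2^2 - 1/4 = 0 := by linear_combination -hq
  have hid : (x1^2-1/12)*(x2^2-1/12)*((-x1-x2)^2-1/12)
      = -((x1-x2)*(x2-(-x1-x2))*(x1-(-x1-x2)))^2/27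
        + (4/27*x1^4 + 8/27*x1^3*x2 + 4/9*x1^2*x2^2 + 8/27*x1*x2^3 + 4/27*x2^4
           - 5/108*x1^2 - 5/108*x1*x2 - 5/108*x2^2 + 1/432) * (x1^2+x1*x2+x2^2-1/4) := by
    ring
  rw [hq'] at hid
  nlinarith [sq_nonneg ((x1-x2)*(x2-(-x1-x2))*(x1-(-x1-x2))),
    mul_pos (mul_pos (by linarith : (0:ℝ) < x1^2-1/12) (by linarith : (0:ℝ) < x2^2-1/12))
      (by linarith : (0:ℝ) < (-x1-x2)^2-1/12)]



/-- Appendix B of the paper, existence and uniqueness of `K_r`: for every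
`w ∈ ℂ` with `Re w ≤ 0` there is a unique `κ` in the closure of
`D₃ = {Im k < 0, Im(4k³−k) > 0}`, i.e. with `Im κ ≤ 0` and `12(Re κ)² − 4(Im κ)² ≤ 1`,
such that `2i(4κ³ − κ) = w`. -/
theorem unique_preimage_in_closure_D3
    (w : ℂ) (hw : w.re ≤ 0) :
    ∃! κ : ℂ, (κ.im ≤ 0 ∧ 12 * κ.re ^ 2 - 4 * κ.im ^ 2 ≤ 1) ∧
      2 * Complex.I * (4 * κ ^ 3 - κ) = w := by
  have h2I : (2*Complex.I) ≠ 0 := mul_ne_zero two_ne_zero Complex.I_ne_zero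
  -- existence
  have hex : ∃ κ : ℂ, (κ.im ≤ 0 ∧ 12 * κ.re ^ 2 - 4 * κ.im ^ 2 ≤ 1) ∧
      2 * Complex.I * (4 * κ ^ 3 - κ) = w := by
    by_contra hno
    push_neg at hno
    obtain ⟨r1, hr1⟩ := exists_cubic_root (w/(2*Complex.I))
    obtain ⟨t, ht⟩ := IsAlgClosed.exists_pow_nat_eq ((1 - 3*r1^2)/4) (n := 2) (by norm_num)
    set r2 : ℂ := -r1/2 + t with hr2def
    set r3 : ℂ := -r1/2 - t with hr3def
    have hr2 : 4*r2^3 - r2 = w/(2*Complex.I) := by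
      rw [hr2def]; linear_combination hr1 + (4*t - 6*r1) * ht
    have hr3 : 4*r3^3 - r3 = w/(2*Complex.I) := by
      rw [hr3def]; linear_combination hr1 + (-4*t - 6*r1) * ht
    -- each root maps to w
    have hwmap : ∀ κ : ℂ, 4*κ^3 - κ = w/(2*Complex.I) → 2*Complex.I*(4*κ^3 - κ) = w := by
      intro κ hκ; rw [hκ]; field_simp
    -- each root satisfies the sign condition
    have hsign : ∀ κ : ℂ, 4*κ^3 - κ = w/(2*Complex.I) →
        0 ≤ κ.im * (12*κ.re^2 - 4*κ.im^2 - 1) := by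
      intro κ hκ
      have h1 := congrArg Complex.re (hwmap κ hκ)
      rw [re_2I] at h1
      have h2 : (4*κ^3 - κ).im = κ.im * (12*κ.re^2 - 4*κ.im^2 - 1) := im_cubic_s17 κ
      nlinarith [hw, h1, h2]
    -- non-membership facts
    have hnm : ∀ κ : ℂ, 4*κ^3 - κ = w/(2*Complex.I) →
        ¬(κ.im ≤ 0 ∧ 12*κ.re^2 - 4*κ.im^2 ≤ 1) := by
      intro κ hκ h
      exact hno κ ⟨h.1, by linarith [h.2]⟩ (hwmap κ hκ)
    -- each root has nonneg imaginary part
    have hy : ∀ κ : ℂ, 4*κ^3 - κ = w/(2*Complex.I) → 0 ≤ κ.im := by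
      intro κ hκ
      by_contra h
      push_neg at h
      exact hnm κ hκ ⟨le_of_lt h, by nlinarith [hsign κ hκ]⟩
    have hy1 := hy r1 hr1
    have hy2 := hy r2 hr2
    have hy3 := hy r3 hr3
    -- the imaginary parts sum to zero
    have hsum : r1 + r2 + r3 = 0 := by rw [hr2def, hr3def]; ring
    have hsumim : r1.im + r2.im + r3.im = 0 := by
      have := congrArg Complex.im hsum
      simpa [Complex.add_im] using this
    have hz1 : r1.im = 0 := by linarith
    have hz2 : r2.im = 0 := by linarith
    have hz3 : r3.im = 0 := by linarith
    -- each real part squared exceeds 1/12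
    have hx : ∀ κ : ℂ, 4*κ^3 - κ = w/(2*Complex.I) → κ.im = 0 → 1/12 < κ.re^2 := by
      intro κ hκ hκim
      by_contra h
      push_neg at h
      exact hnm κ hκ ⟨le_of_eq hκim, by rw [hκim]; nlinarith⟩
    have hx1 := hx r1 hr1 hz1
    have hx2 := hx r2 hr2 hz2
    have hx3 := hx r3 hr3 hz3
    -- symmetric function facts
    have hsumre : r1.re + r2.re + r3.re = 0 := by
      have := congrArg Complex.re hsum
      simpa [Complex.add_re] using this
    have he2 : r1*r2 + r1*r3 + r2*r3 = -(1/4 : ℂ) := by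
      rw [hr2def, hr3def]; linear_combination -ht
    have he2re : r1.re*r2.re + r1.re*r3.re + r2.re*r3.re = -(1/4 : ℝ) := by
      have := congrArg Complex.re he2
      simp only [Complex.add_re, Complex.mul_re, hz1, hz2, hz3, mul_zero, sub_zero,
        Complex.neg_re] at this
      convert this using 2
      norm_num [Complex.div_re]
    exact keyReal r1.re r2.re r3.re hsumre he2re hx1 hx2 hx3
  obtain ⟨κ₀, hκ₀⟩ := hex
  refine ⟨κ₀, hκ₀, ?_⟩
  intro κ hκ
  -- uniqueness
  have hcancel : 4*κ^3 - κ = 4*κ₀^3 - κ₀ := by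
    apply mul_left_cancel₀ h2I
    rw [show (2:ℂ)*Complex.I*(4*κ^3-κ) = 2*Complex.I*(4*κ^3-κ) from rfl]
    calc 2*Complex.I*(4*κ^3-κ) = w := hκ.2
    _ = 2*Complex.I*(4*κ₀^3-κ₀) := hκ₀.2.symm
  have hfac : (κ - κ₀) * (4*(κ^2 + κ*κ₀ + κ₀^2) - 1) = 0 := by linear_combination hcancel
  rcases mul_eq_zero.1 hfac with h | h
  · exact sub_eq_zero.1 h
  · -- quadratic relation
    have hre : 4*(κ.re^2 - κ.im^2 + (κ.re*κ₀.re - κ.im*κ₀.im) + (κ₀.re^2 - κ₀.im^2)) - 1 = 0 := by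
      have := congrArg Complex.re h
      simpa [Complex.mul_re, Complex.add_re, Complex.sub_re, pow_two] using this
    obtain ⟨⟨hyk, hqk⟩, -⟩ := hκ
    obtain ⟨⟨hy0, hq0⟩, -⟩ := hκ₀
    have hyy : 0 ≤ κ.im * κ₀.im := by nlinarith [hyk, hy0]
    have hsq : κ.im^2 + κ₀.im^2 ≤ 0 := by
      nlinarith [sq_nonneg (κ.re - κ₀.re), hre, hqk, hq0, hyy]
    have him1 : κ.im = 0 := by nlinarith [sq_nonneg κ.im, sq_nonneg κ₀.im]
    have him2 : κ₀.im = 0 := by nlinarith [sq_nonneg κ.im, sq_nonneg κ₀.im]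
    have hxx : κ.re = κ₀.re := by
      nlinarith [sq_nonneg (κ.re - κ₀.re), hre, hqk, hq0, him1, him2]
    exact Complex.ext hxx (him1.trans him2.symm)
end
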